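/- Let a, r, s ∈ ℕ and k ∈ ℤ. Then q^{-a(a+1)(r+2ar+3s)/6}·ℬ_{a,k,r,s}(q) = ∏_{n≥1} 1/(1−q^n)^k + O(q^{a+1}); that is, for every integer 0 ≤ m ≤ a, the coefficient d_{a,k,r,s}(m + a(a+1)(r+2ar+3s)/6) equals the coefficient of q^m in the formal power series ∏_{n≥1} (1−q^n)^{-k}. -/

import Mathlib

open PowerSeries Finset
open scoped Classical

noncomputable section

/-- `(1 - q^n)^(-k)` in `ℚ⟦q⟧`, for `k : ℤ` (for negative `k` this is the
power `(1 - q^n)^{|k|}`). -/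
def dFac (n : ℕ) (k : ℤ) : PowerSeries ℚ :=
  if 0 ≤ k then ((1 - (X : PowerSeries ℚ) ^ n)⁻¹) ^ k.toNat
  else (1 - (X : PowerSeries ℚ) ^ n) ^ (-k).toNat

/-- Strictly increasing `a`-tuples `1 ≤ n₁ < n₂ < ⋯ < n_a ≤ N`. -/
def strictTuples (a N : ℕ) : Finset (Fin a → ℕ) :=
  (Fintype.piFinset fun _ : Fin a => Finset.Icc 1 N).filter fun f => StrictMono f

/-- The coefficient `d_{a,k,r,s}(N)` of `q^N` in
`ℬ_{a,k,r,s}(q) = Σ_{1≤n₁<⋯<n_a} q^{r(n₁²+⋯+n_a²)+s(n₁+⋯+n_a)} / ∏_j (1-q^{n_j})^k`.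
Since `r, s ≥ 1`, tuples containing an entry `> N` contribute `0` to the coefficient of `q^N`,
so the (q-adically convergent) infinite sum can be truncated to entries in `[1, N]`. -/
def Bcoeff (a : ℕ) (k : ℤ) (r s : ℕ) (N : ℕ) : ℚ :=
  ∑ f ∈ strictTuples a N,
    PowerSeries.coeff N
      ((X : PowerSeries ℚ) ^ (r * (∑ j, (f j) ^ 2) + s * ∑ j, f j) * ∏ j, dFac (f j) k)

/-!
Put `S = r ∑_{j ≤ a} j² + s ∑_{j ≤ a} j`, so that `6 S = a(a+1)(r+2ar+3s)`. The tuple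
`(1, …, a)` is the only strictly increasing tuple of positive integers bounded by `a`; any
other one has an entry `≥ a + 1`, which raises `∑ n_j²` by at least `2a + 1 > m` above its
minimum, so it does not reach the coefficient of `q^{m+S}`. The tuple `(1, …, a)` contributes
the coefficient of `q^m` in `∏_{n ≤ a} (1 - q^n)^{-k}`, and the factors with `n > m` are
`≡ 1 mod q^{m+1}`.
-/

namespace PowerSeries

variable {R : Type*} [CommRing R]

theorem coeff_eq_of_X_pow_dvd_sub {m : ℕ} {P Q : R⟦X⟧} (h : X ^ (m + 1) ∣ P - Q) :
    coeff m P = coeff m Q :=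
  sub_eq_zero.1 <| by rw [← map_sub]; exact X_pow_dvd_iff.1 h m (lt_add_one m)

end PowerSeries

theorem dvd_prod_sub_one {R ι : Type*} [CommRing R] {D : R} {s : Finset ι} {g : ι → R}
    (h : ∀ i ∈ s, D ∣ g i - 1) : D ∣ ∏ i ∈ s, g i - 1 := by
  simp_rw [← Ideal.mem_span_singleton, ← Ideal.Quotient.eq, map_one] at h ⊢
  rw [map_prod]
  exact Finset.prod_eq_one h

theorem X_pow_dvd_dFac_sub_one {n : ℕ} (hn : n ≠ 0) (k : ℤ) :
    (X : ℚ⟦X⟧) ^ n ∣ dFac n k - 1 := by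
  have hbase : (X : ℚ⟦X⟧) ^ n ∣ (1 - X ^ n) - 1 := by simp
  have hunit : constantCoeff (1 - (X : ℚ⟦X⟧) ^ n) ≠ 0 := by simp [zero_pow hn]
  have hinv : (X : ℚ⟦X⟧) ^ n ∣ (1 - X ^ n)⁻¹ - 1 := by
    have : (1 - (X : ℚ⟦X⟧) ^ n)⁻¹ - 1 = -(1 - X ^ n)⁻¹ * ((1 - X ^ n) - 1) := by
      linear_combination PowerSeries.inv_mul_cancel _ hunit
    exact this ▸ hbase.mul_left _
  unfold dFac
  split_ifs
  · exact hinv.trans (sub_one_dvd_pow_sub_one _ _)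
  · exact hbase.trans (sub_one_dvd_pow_sub_one _ _)

theorem coeff_prod_dFac_Icc_of_le {m a : ℕ} (hm : m ≤ a) (k : ℤ) :
    coeff m (∏ n ∈ Icc 1 a, dFac n k) = coeff m (∏ n ∈ Icc 1 m, dFac n k) := by
  apply coeff_eq_of_X_pow_dvd_sub
  rw [← prod_sdiff (Icc_subset_Icc_right hm), ← sub_one_mul]
  refine dvd_mul_of_dvd_left (dvd_prod_sub_one fun n hn => ?_) _
  have hmn : m + 1 ≤ n := by simp only [mem_sdiff, mem_Icc] at hn; omega
  exact (pow_dvd_pow _ hmn).trans (X_pow_dvd_dFac_sub_one (by omega) k)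

@[to_additive]
theorem prod_Icc_eq_prod_fin {M : Type*} [CommMonoid M] (a : ℕ) (h : ℕ → M) :
    ∏ n ∈ Icc 1 a, h n = ∏ j : Fin a, h (j + 1) := by
  rw [Fin.prod_univ_eq_prod_range (fun j => h (j + 1)), ← Ico_add_one_right_eq_Icc,
    prod_Ico_eq_prod_range]
  simp [add_comm]

theorem six_mul_weight_Icc (a r s : ℕ) :
    6 * (r * ∑ n ∈ Icc 1 a, n ^ 2 + s * ∑ n ∈ Icc 1 a, n) =
      a * (a + 1) * (r + 2 * a * r + 3 * s) := by
  induction a with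
  | zero => simp
  | succ a ih =>
    rw [sum_Icc_succ_top (by omega), sum_Icc_succ_top (by omega)]
    linear_combination ih

section StrictTuples

variable {a : ℕ} {f : Fin a → ℕ}

theorem mem_strictTuples {N : ℕ} :
    f ∈ strictTuples a N ↔ (∀ j, f j ∈ Icc 1 N) ∧ StrictMono f := by
  simp [strictTuples]

theorem StrictMono.val_add_le_apply (hf : StrictMono f) {c : ℕ} (hc : ∀ j, c ≤ f j)
    (i : Fin a) :
    i + c ≤ f i := by
  have := card_le_card_of_injOn f (s := Iic i) (t := Icc c (f i))
    (fun j hj => by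
      simp only [coe_Iic, Set.mem_Iic, coe_Icc, Set.mem_Icc] at hj ⊢
      exact ⟨hc j, hf.monotone hj⟩)
    hf.injective.injOn
  simp only [Fin.card_Iic, Nat.card_Icc] at this
  have := hc i
  omega

theorem StrictMono.eq_val_add_one_of_le (hf : StrictMono f) (hpos : ∀ j, 1 ≤ f j)
    (hle : ∀ j, f j ≤ a) :
    f = fun j : Fin a => (j : ℕ) + 1 := by
  have hcard : #(Icc 1 a) = a := by simp
  rw [orderEmbOfFin_unique hcard (fun j => mem_Icc.2 ⟨hpos j, hle j⟩) hf,
    orderEmbOfFin_unique hcard (f := fun j : Fin a => (j : ℕ) + 1)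
      (fun j => mem_Icc.2 ⟨by omega, j.isLt⟩) (fun i j hij => by simpa using hij)]

theorem StrictMono.sum_sq_add_le_of_ne (hf : StrictMono f) (hpos : ∀ j, 1 ≤ f j)
    (hne : f ≠ fun j : Fin a => (j : ℕ) + 1) :
    ∑ j : Fin a, ((j : ℕ) + 1) ^ 2 + (2 * a + 1) ≤ ∑ j, f j ^ 2 := by
  obtain ⟨j, hj⟩ : ∃ j, a < f j := by
    by_contra! h
    exact hne (hf.eq_val_add_one_of_le hpos h)
  have hlow : ∀ i : Fin a, (i : ℕ) + 1 ≤ f i := hf.val_add_le_apply hpos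
  rw [← add_sum_erase _ _ (mem_univ j), ← add_sum_erase _ _ (mem_univ j)]
  have hrest :
      ∑ i ∈ univ.erase j, (((i : Fin a) : ℕ) + 1) ^ 2 ≤ ∑ i ∈ univ.erase j, f i ^ 2 :=
    sum_le_sum fun i _ => Nat.pow_le_pow_left (hlow i) 2
  have hjlt : (j : ℕ) + 1 ≤ a := j.isLt
  nlinarith

theorem StrictMono.weight_lt_of_ne (hf : StrictMono f) (hpos : ∀ j, 1 ≤ f j)
    (hne : f ≠ fun j : Fin a => (j : ℕ) + 1) {r s m : ℕ} (hr : 1 ≤ r) (hm : m ≤ a) :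
    m + (r * ∑ j : Fin a, ((j : ℕ) + 1) ^ 2 + s * ∑ j : Fin a, ((j : ℕ) + 1)) <
      r * ∑ j, f j ^ 2 + s * ∑ j, f j := by
  have hsq := Nat.mul_le_mul_left r (hf.sum_sq_add_le_of_ne hpos hne)
  have hsum : s * ∑ j : Fin a, ((j : ℕ) + 1) ≤ s * ∑ j, f j :=
    Nat.mul_le_mul_left s (sum_le_sum fun i _ => hf.val_add_le_apply hpos i)
  have hgap : 2 * a + 1 ≤ r * (2 * a + 1) := Nat.le_mul_of_pos_left _ hr
  rw [mul_add] at hsq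
  omega

end StrictTuples

theorem B_approximates_eta_power_general (a r s : ℕ) (hr : 1 ≤ r) (k : ℤ)
    (m : ℕ) (hm : m ≤ a) :
    Bcoeff a k r s (m + a * (a + 1) * (r + 2 * a * r + 3 * s) / 6) =
      PowerSeries.coeff m (∏ n ∈ Finset.Icc 1 m, dFac n k) := by
  set S := r * ∑ j : Fin a, ((j : ℕ) + 1) ^ 2 + s * ∑ j : Fin a, ((j : ℕ) + 1)
  have hS : a * (a + 1) * (r + 2 * a * r + 3 * s) / 6 = S := by
    rw [← six_mul_weight_Icc, sum_Icc_eq_sum_fin, sum_Icc_eq_sum_fin]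
    omega
  have haS : a ≤ S := calc
    a = ∑ _j : Fin a, 1 := by simp
    _ ≤ ∑ j : Fin a, ((j : ℕ) + 1) ^ 2 :=
      sum_le_sum fun j _ => Nat.one_le_pow _ _ (Nat.succ_pos _)
    _ ≤ S := (Nat.le_mul_of_pos_left _ hr).trans (Nat.le_add_right _ _)
  have hmin : (fun j : Fin a => (j : ℕ) + 1) ∈ strictTuples a (m + S) :=
    mem_strictTuples.2 ⟨fun j => mem_Icc.2 ⟨by omega, by have := j.isLt; omega⟩,
      fun i j hij => by simpa using hij⟩
  have hvanish : ∀ f ∈ strictTuples a (m + S), f ≠ (fun j : Fin a => (j : ℕ) + 1) →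
      coeff (m + S) (X ^ (r * ∑ j, f j ^ 2 + s * ∑ j, f j) * ∏ j, dFac (f j) k) = 0 := by
    intro f hf hne
    obtain ⟨hrange, hmono⟩ := mem_strictTuples.1 hf
    have hlt := hmono.weight_lt_of_ne (s := s) (fun j => (mem_Icc.1 (hrange j)).1) hne hr hm
    rw [coeff_X_pow_mul', if_neg (by omega)]
  rw [hS, Bcoeff, sum_eq_single_of_mem _ hmin hvanish, coeff_X_pow_mul',
    if_pos (Nat.le_add_left _ _), Nat.add_sub_cancel,
    ← prod_Icc_eq_prod_fin a (fun n => dFac n k)]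
  exact coeff_prod_dFac_Icc_of_le hm k

/-- Theorem 1.2 (1), second part.  For `a, r, s ∈ ℕ` (positive) and `k ∈ ℤ`,
`q^{-a(a+1)(r+2ar+3s)/6} ℬ_{a,k,r,s}(q) = ∏_{n≥1} (1-q^n)^{-k} + O(q^{a+1})`:
for every `0 ≤ m ≤ a`, the coefficient `d_{a,k,r,s}(m + a(a+1)(r+2ar+3s)/6)` equals the
coefficient of `q^m` in `∏_{n≥1} (1-q^n)^{-k}` (factors with `n > m` do not affect this
coefficient, so the infinite product may be truncated at `n = m`). -/
theorem B_approximates_eta_power (a r s : ℕ) (ha : 1 ≤ a) (hr : 1 ≤ r) (hs : 1 ≤ s) (k : ℤ)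
    (m : ℕ) (hm : m ≤ a) :
    Bcoeff a k r s (m + a * (a + 1) * (r + 2 * a * r + 3 * s) / 6) =
      PowerSeries.coeff m (∏ n ∈ Finset.Icc 1 m, dFac n k) :=
  B_approximates_eta_power_general a r s hr k m hm
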